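/- arXiv:1010.2606 — 6 statements merged into one kernel-verified Lean document; each statement's English description precedes it below -/
import Mathlib

section
/- For 0 ≤ i ≤ D, the eigenspace of the adjacency matrix A of Q_D for the eigenvalue D − 2i has dimension binom(D, i), and the vectors w_S with |S| = i form a basis of it. -/
open Matrix BigOperators Finset

/-- Vertex set of the `D`-dimensional hypercube. -/
abbrev Vx (D : ℕ) := Fin D → Fin 2

/-- Number of coordinates at which `x` and `y` differ (Hamming distance). -/
def hamming {D : ℕ} (x y : Vx D) : ℕ :=
  (Finset.univ.filter (fun i => x i ≠ y i)).card

/-- Adjacency matrix of the hypercube `Q_D`. -/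
noncomputable def adjA (D : ℕ) : Matrix (Vx D) (Vx D) ℝ :=
  fun x y => if hamming x y = 1 then 1 else 0

/-- The `i`-adjacency matrix `α_i`. -/
noncomputable def alpha {D : ℕ} (i : Fin D) : Matrix (Vx D) (Vx D) ℝ :=
  fun x y => if (x i ≠ y i ∧ ∀ j, j ≠ i → x j = y j) then 1 else 0

/-- The diagonal matrix `α*_i` with `(x,x)`-entry `(-1)^(x_i)`. -/
noncomputable def alphaStar {D : ℕ} (i : Fin D) : Matrix (Vx D) (Vx D) ℝ :=
  Matrix.diagonal (fun x => (-1 : ℝ) ^ ((x i : ℕ)))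

/-- `D`-fold tensor (Kronecker) product of `2×2` matrices, realized on index set `Vx D`. -/
noncomputable def tensorMat {D : ℕ} (M : Fin D → Matrix (Fin 2) (Fin 2) ℝ) :
    Matrix (Vx D) (Vx D) ℝ :=
  fun x y => ∏ i, M i (x i) (y i)

/-- `D`-fold tensor product of vectors in `ℝ²`, realized in `ℝ^(Vx D)`. -/
noncomputable def tensorVec {D : ℕ} (f : Fin D → (Fin 2 → ℝ)) : Vx D → ℝ :=
  fun x => ∏ i, f i (x i)

/-- `u = (1/√2)(1,1)ᵗ`. -/
noncomputable def uvec : Fin 2 → ℝ := ![1 / Real.sqrt 2, 1 / Real.sqrt 2]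

/-- `v = (1/√2)(1,-1)ᵗ`. -/
noncomputable def vvec : Fin 2 → ℝ := ![1 / Real.sqrt 2, -(1 / Real.sqrt 2)]

/-- The vector `w_S`. -/
noncomputable def wS {D : ℕ} (S : Finset (Fin D)) : Vx D → ℝ :=
  tensorVec (fun i => if i ∈ S then vvec else uvec)

/-! Flipping coordinate `k` fixes `u` and negates `v`, so it multiplies `w_S` by `-1` if `k ∈ S`
and by `1` otherwise; summing over the `D` neighbours of a vertex shows `A w_S = (D - 2|S|) w_S`.
The `2^D` vectors `w_S` are orthonormal, hence form an eigenbasis of `A`, and the eigenspace for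
`μ` is spanned by the basis vectors with eigenvalue `μ`. -/

section EigenbasisSpan

variable {ι K V : Type*} [Field K] [AddCommGroup V] [Module K V]

theorem Module.Basis.repr_apply_of_apply_eq_smul (b : Module.Basis ι K V) {f : Module.End K V}
    {eig : ι → K} (hf : ∀ j, f (b j) = eig j • b j) (v : V) (j : ι) :
    b.repr (f v) j = eig j * b.repr v j := by
  have : b.coord j ∘ₗ f = eig j • b.coord j :=
    b.ext fun k => by
      by_cases hkj : k = j
      · subst hkj; simp [hf]
      · simp [hf, Ne.symm hkj]
  exact congr($this v)

theorem Module.Basis.eigenspace_eq_span_image (b : Module.Basis ι K V) {f : Module.End K V}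
    {eig : ι → K} (hf : ∀ j, f (b j) = eig j • b j) (μ : K) :
    f.eigenspace μ = Submodule.span K (b '' {j | eig j = μ}) := by
  refine le_antisymm (fun v hv => ?_) (Submodule.span_le.mpr ?_)
  · rw [Module.End.mem_eigenspace_iff] at hv
    rw [b.mem_span_image]
    intro j hj
    have hrepr := b.repr_apply_of_apply_eq_smul hf v j
    rw [hv, map_smul, Finsupp.smul_apply, smul_eq_mul] at hrepr
    exact (mul_right_cancel₀ (Finsupp.mem_support_iff.mp hj) hrepr).symm
  · rintro _ ⟨j, rfl, rfl⟩
    exact Module.End.mem_eigenspace_iff.mpr (hf j)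

end EigenbasisSpan

theorem Matrix.linearIndependent_of_dotProduct_eq_ite {ι n R : Type*} [Fintype ι] [DecidableEq ι]
    [Fintype n] [CommRing R] [Nontrivial R] (w : ι → n → R)
    (hw : ∀ j k, w j ⬝ᵥ w k = if j = k then 1 else 0) : LinearIndependent R w := by
  refine LinearIndependent.of_comp (Matrix.of w).mulVecLin ?_
  convert (Pi.basisFun R ι).linearIndependent using 1
  ext j k
  simp [Matrix.mulVec, hw, Pi.single_apply, eq_comm]

theorem tensorVec_dotProduct_tensorVec {D : ℕ} (f g : Fin D → Fin 2 → ℝ) :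
    tensorVec f ⬝ᵥ tensorVec g = ∏ i, f i ⬝ᵥ g i := by
  simp only [dotProduct, tensorVec, ← prod_mul_distrib]
  rw [prod_univ_sum (fun _ => univ), Fintype.piFinset_univ]

theorem ite_vvec_uvec_dotProduct (p q : Prop) [Decidable p] [Decidable q] :
    (if p then vvec else uvec) ⬝ᵥ (if q then vvec else uvec) = if p ↔ q then 1 else 0 := by
  have half : (√2 : ℝ)⁻¹ * (√2)⁻¹ = 1 / 2 := by
    rw [← mul_inv, Real.mul_self_sqrt zero_le_two, one_div]
  by_cases hp : p <;> by_cases hq : q <;>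
    norm_num [hp, hq, uvec, vvec, dotProduct, Fin.sum_univ_two, half]

theorem wS_dotProduct_wS {D : ℕ} (S T : Finset (Fin D)) :
    wS S ⬝ᵥ wS T = if S = T then 1 else 0 := by
  simp only [wS, tensorVec_dotProduct_tensorVec, ite_vvec_uvec_dotProduct, prod_boole, mem_univ,
    true_implies, ← Finset.ext_iff]

theorem linearIndependent_wS (D : ℕ) : LinearIndependent ℝ (wS (D := D)) :=
  linearIndependent_of_dotProduct_eq_ite _ wS_dotProduct_wS

noncomputable def wSBasis (D : ℕ) : Module.Basis (Finset (Fin D)) ℝ (Vx D → ℝ) :=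
  basisOfLinearIndependentOfCardEqFinrank (linearIndependent_wS D) (by simp [Fintype.card_finset])

theorem coe_wSBasis (D : ℕ) : ⇑(wSBasis D) = wS :=
  coe_basisOfLinearIndependentOfCardEqFinrank _ _

def flipAt {D : ℕ} (x : Vx D) (k : Fin D) : Vx D := Function.update x k (x k + 1)

theorem hamming_eq_one_iff {D : ℕ} {x y : Vx D} : hamming x y = 1 ↔ ∃ k, flipAt x k = y := by
  simp only [hamming, card_eq_one, Finset.ext_iff, mem_filter, mem_univ, true_and, mem_singleton,
    funext_iff, flipAt, Function.update_apply]
  refine exists_congr fun k => forall_congr' fun j => ?_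
  split_ifs with hjk
  · subst hjk
    simp only [iff_true]
    generalize x j = a, y j = b
    revert a b; decide
  · generalize x j = a, y j = b
    revert a b; simp [hjk]

theorem flipAt_injective {D : ℕ} (x : Vx D) : Function.Injective (flipAt x) := by
  intro k l hkl
  by_contra hne
  have := congr_fun hkl k
  simp [flipAt, hne] at this

theorem adjA_mulVec_apply {D : ℕ} (w : Vx D → ℝ) (x : Vx D) :
    (adjA D *ᵥ w) x = ∑ k, w (flipAt x k) := by
  have hneighbours : univ.filter (fun y => hamming x y = 1) = univ.image (flipAt x) := by
    ext y; simp [hamming_eq_one_iff]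
  simp only [mulVec, dotProduct, adjA, ite_mul, one_mul, zero_mul]
  rw [← sum_filter, hneighbours, sum_image fun k _ l _ h => flipAt_injective x h]

theorem tensorVec_flipAt {D : ℕ} (f : Fin D → Fin 2 → ℝ) (x : Vx D) (k : Fin D) {c : ℝ}
    (hc : ∀ a, f k (a + 1) = c * f k a) :
    tensorVec f (flipAt x k) = c * tensorVec f x := by
  simp only [tensorVec, flipAt, Function.apply_update (fun j => f j)]
  rw [prod_update_of_mem (mem_univ k), hc, mul_assoc,
    ← prod_eq_mul_prod_sdiff_singleton_of_mem (mem_univ k) fun j => f j (x j)]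

theorem wS_flipAt {D : ℕ} (S : Finset (Fin D)) (x : Vx D) (k : Fin D) :
    wS S (flipAt x k) = (if k ∈ S then -1 else 1) * wS S x := by
  refine tensorVec_flipAt _ x k fun a => ?_
  by_cases hk : k ∈ S <;> fin_cases a <;> simp [hk, uvec, vvec]

theorem sum_ite_mem_neg_one_one {D : ℕ} (S : Finset (Fin D)) :
    ∑ k, (if k ∈ S then -1 else 1 : ℝ) = D - 2 * #S := by
  have hsign : ∀ k, (if k ∈ S then -1 else 1 : ℝ) = 1 - 2 * if k ∈ S then 1 else 0 := fun k => by
    split_ifs <;> norm_num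
  simp [hsign, sum_sub_distrib, mul_comm]

theorem adjA_mulVec_wS {D : ℕ} (S : Finset (Fin D)) :
    adjA D *ᵥ wS S = ((D : ℝ) - 2 * #S) • wS S := by
  ext x
  simp only [adjA_mulVec_apply, wS_flipAt, ← sum_mul, sum_ite_mem_neg_one_one, Pi.smul_apply,
    smul_eq_mul]

theorem eigenspace_basis_general (D : ℕ) (i : ℕ) :
    Module.finrank ℝ
        (Module.End.eigenspace (Matrix.mulVecLin (adjA D)) ((D : ℝ) - 2 * i)) = D.choose i ∧
    LinearIndependent ℝ (fun S : {S : Finset (Fin D) // S.card = i} => wS S.1) ∧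
    Submodule.span ℝ (wS '' {S : Finset (Fin D) | S.card = i}) =
      Module.End.eigenspace (Matrix.mulVecLin (adjA D)) ((D : ℝ) - 2 * i) := by
  have heig : {S : Finset (Fin D) | (D : ℝ) - 2 * #S = D - 2 * i} = {S | #S = i} := by
    ext S; simp
  have hspan : Submodule.span ℝ (wS '' {S : Finset (Fin D) | S.card = i}) =
      Module.End.eigenspace (Matrix.mulVecLin (adjA D)) ((D : ℝ) - 2 * i) := by
    rw [(wSBasis D).eigenspace_eq_span_image (eig := fun S => (D : ℝ) - 2 * #S)
      (by simp [coe_wSBasis, adjA_mulVec_wS]), coe_wSBasis, heig]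
  have hli : LinearIndependent ℝ (fun S : {S : Finset (Fin D) // S.card = i} => wS S.1) :=
    (linearIndependent_wS D).comp _ Subtype.val_injective
  refine ⟨?_, hli, hspan⟩
  rw [← hspan, Set.image_eq_range]
  exact (finrank_span_eq_card hli).trans (by simp)

theorem eigenspace_basis (D : ℕ) (hD : 0 < D) (i : ℕ) (hi : i ≤ D) :
    Module.finrank ℝ
        (Module.End.eigenspace (Matrix.mulVecLin (adjA D)) ((D : ℝ) - 2 * i)) = D.choose i ∧
    LinearIndependent ℝ (fun S : {S : Finset (Fin D) // S.card = i} => wS S.1) ∧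
    Submodule.span ℝ (wS '' {S : Finset (Fin D) | S.card = i}) =
      Module.End.eigenspace (Matrix.mulVecLin (adjA D)) ((D : ℝ) - 2 * i) :=
  eigenspace_basis_general D i
end

section
/- For B ∈ Mat_X(ℝ), the following are equivalent: (i) B_{xy} = 0 whenever x and y differ in at least two coordinates; (ii) for all 1 ≤ i < j ≤ D, α*_i α*_j B − α*_i B α*_j − α*_j B α*_i + B α*_i α*_j = 0. -/
open Matrix BigOperators Finset

lemma entry_formula {D : ℕ} (B : Matrix (Vx D) (Vx D) ℝ) (i j : Fin D) (x y : Vx D) :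
    (alphaStar i * alphaStar j * B - alphaStar i * B * alphaStar j
        - alphaStar j * B * alphaStar i + B * (alphaStar i * alphaStar j)) x y
      = ((-1 : ℝ) ^ ((x i : ℕ)) - (-1) ^ ((y i : ℕ)))
        * ((-1 : ℝ) ^ ((x j : ℕ)) - (-1) ^ ((y j : ℕ))) * B x y := by
  simp only [alphaStar, Matrix.diagonal_mul_diagonal, Matrix.sub_apply, Matrix.add_apply,
    Matrix.diagonal_mul, Matrix.mul_diagonal, Matrix.mul_assoc]
  ring

lemma neg_one_pow_ne {a b : Fin 2} (h : a ≠ b) :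
    ((-1 : ℝ) ^ ((a : ℕ)) - (-1) ^ ((b : ℕ))) ≠ 0 := by
  fin_cases a <;> fin_cases b <;> simp_all <;> norm_num

theorem vanishing_iff (D : ℕ) (hD : 0 < D) (B : Matrix (Vx D) (Vx D) ℝ) :
    (∀ x y : Vx D, 2 ≤ hamming x y → B x y = 0) ↔
    (∀ i j : Fin D, i < j →
      alphaStar i * alphaStar j * B - alphaStar i * B * alphaStar j
        - alphaStar j * B * alphaStar i + B * (alphaStar i * alphaStar j) = 0) := by
  constructor
  · intro h i j hij
    ext x y
    rw [entry_formula]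
    by_cases hxi : x i = y i
    · simp [hxi]
    by_cases hxj : x j = y j
    · simp [hxj]
    have h2 : 2 ≤ hamming x y := by
      have hsub : ({i, j} : Finset (Fin D)) ⊆ Finset.univ.filter (fun k => x k ≠ y k) := by
        intro k hk
        simp only [Finset.mem_insert, Finset.mem_singleton] at hk
        rcases hk with rfl | rfl <;> simp [hxi, hxj]
      have := Finset.card_le_card hsub
      rwa [Finset.card_insert_of_notMem (by simp [hij.ne]), Finset.card_singleton] at this
    simp [h x y h2]
  · intro h x y hxy
    obtain ⟨a, ha, b, hb, hab⟩ := Finset.one_lt_card.mp hxy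
    simp only [Finset.mem_filter] at ha hb
    wlog hlt : a < b generalizing a b
    · exact this b a hab.symm hb ha (hab.symm.lt_of_le (not_lt.mp hlt))
    have h0 := h a b hlt
    have := congrFun (congrFun h0 x) y
    rw [entry_formula] at this
    simp only [Matrix.zero_apply] at this
    rcases mul_eq_zero.mp this with h1 | h1
    · rcases mul_eq_zero.mp h1 with h2 | h2
      · exact absurd h2 (neg_one_pow_ne ha.2)
      · exact absurd h2 (neg_one_pow_ne hb.2)
    · exact h1
end

section
/- Let B be a symmetric A-like matrix for Q_D. Then all diagonal entries of B are equal: B_{xx} = B_{yy} for all x, y ∈ X. -/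
open Matrix BigOperators Finset

lemma hamming_eq_zero_iff {D : ℕ} {x y : Vx D} : hamming x y = 0 ↔ x = y := by
  unfold hamming
  rw [Finset.card_eq_zero, Finset.filter_eq_empty_iff]
  constructor
  · intro h; funext i
    have := h (Finset.mem_univ i); simpa using this
  · intro h i _; simp [h]

lemma hamming_one {D : ℕ} {x y : Vx D} (h : hamming x y = 1) :
    ∃ i, x i ≠ y i ∧ ∀ j, j ≠ i → x j = y j := by
  unfold hamming at h
  obtain ⟨i, hi⟩ := Finset.card_eq_one.mp h
  refine ⟨i, ?_, ?_⟩
  · have : i ∈ Finset.univ.filter (fun i => x i ≠ y i) := by rw [hi]; simp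
    simpa using this
  · intro j hj
    by_contra hne
    have : j ∈ Finset.univ.filter (fun i => x i ≠ y i) := by simp [hne]
    rw [hi] at this
    exact hj (Finset.mem_singleton.mp this)

lemma fin2_eq {a b c : Fin 2} (h1 : a ≠ b) (h2 : c ≠ b) : a = c := by
  revert h1 h2; revert a b c; decide

/-- No triangles: if x~y, x~z and z ≠ y then z is not adjacent to y. -/
lemma no_triangle {D : ℕ} {x y z : Vx D} (hxy : hamming x y = 1)
    (hxz : hamming x z = 1) (hzy : z ≠ y) : hamming z y ≠ 1 := by
  intro h1
  obtain ⟨i, hi1, hi2⟩ := hamming_one hxy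
  obtain ⟨j, hj1, hj2⟩ := hamming_one hxz
  by_cases hij : j = i
  · subst hij
    apply hzy
    funext l
    by_cases hl : l = j
    · subst hl; exact fin2_eq (Ne.symm hj1) (Ne.symm hi1)
    · rw [← hj2 l hl, hi2 l hl]
  · -- z differs from y at both i and j
    have hzi : z i ≠ y i := by
      rw [← hj2 i (Ne.symm hij)]
      exact hi1
    have hzj : z j ≠ y j := by
      rw [← hi2 j hij]
      exact fun h => hj1 h.symm
    have hsub : ({i, j} : Finset (Fin D)) ⊆ Finset.univ.filter (fun l => z l ≠ y l) := by
      intro l hl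
      simp only [Finset.mem_insert, Finset.mem_singleton] at hl
      rcases hl with rfl | rfl <;> simp [hzi, hzj]
    have hcard : 2 ≤ hamming z y := by
      have := Finset.card_le_card hsub
      rwa [Finset.card_insert_of_notMem (by simp [Ne.symm hij]), Finset.card_singleton] at this
    omega

lemma adj_diag_eq {D : ℕ} (B : Matrix (Vx D) (Vx D) ℝ)
    (hcomm : B * adjA D = adjA D * B)
    (hvan : ∀ x y : Vx D, 2 ≤ hamming x y → B x y = 0)
    {x y : Vx D} (hxy : hamming x y = 1) : B x x = B y y := by
  have hne : x ≠ y := by intro h; subst h; rw [hamming_eq_zero_iff.mpr rfl] at hxy; omega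
  have h1 : (B * adjA D) x y = B x x := by
    rw [Matrix.mul_apply]
    rw [Finset.sum_eq_single x]
    · simp [adjA, hxy]
    · intro z _ hzx
      rcases Nat.lt_or_ge (hamming x z) 2 with h | h
      · rcases (by omega : hamming x z = 0 ∨ hamming x z = 1) with h | h
        · exact absurd (hamming_eq_zero_iff.mp h).symm hzx
        · by_cases hzy : z = y
          · subst hzy
            have : hamming z z = 0 := hamming_eq_zero_iff.mpr rfl
            simp [adjA, this]
          · have := no_triangle hxy h hzy
            simp [adjA, this]
      · simp [hvan x z h]
    · simp
  have h2 : (adjA D * B) x y = B y y := by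
    rw [Matrix.mul_apply]
    rw [Finset.sum_eq_single y]
    · simp [adjA, hxy]
    · intro z _ hzy
      rcases Nat.lt_or_ge (hamming z y) 2 with h | h
      · rcases (by omega : hamming z y = 0 ∨ hamming z y = 1) with h | h
        · exact absurd (hamming_eq_zero_iff.mp h) hzy
        · by_cases hzx : z = x
          · subst hzx
            have : hamming z z = 0 := hamming_eq_zero_iff.mpr rfl
            simp [adjA, this]
          · -- hamming x z = 1 would contradict no_triangle (swap roles)
            -- we need adjA x z = 0, i.e. hamming x z ≠ 1
            have hxz : hamming x z ≠ 1 := by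
              intro hxz1
              exact no_triangle hxy hxz1 hzy h
            simp [adjA, hxz]
      · simp [hvan z y h]
    · simp
  rw [← h1, hcomm, h2]

lemma hamming_update {D : ℕ} (x y : Vx D) (i : Fin D) (hi : x i ≠ y i) :
    hamming (Function.update y i (x i)) y = 1 ∧
    hamming x (Function.update y i (x i)) + 1 = hamming x y := by
  constructor
  · unfold hamming
    rw [Finset.card_eq_one]
    refine ⟨i, ?_⟩
    ext l
    simp only [Finset.mem_filter, Finset.mem_univ, true_and, Finset.mem_singleton]
    constructor
    · intro hl
      by_contra hli
      rw [Function.update_of_ne hli] at hl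
      exact hl rfl
    · intro hl; subst hl; rw [Function.update_self]; exact hi
  · unfold hamming
    have : Finset.univ.filter (fun l => x l ≠ y l) =
        insert i (Finset.univ.filter (fun l => x l ≠ Function.update y i (x i) l)) := by
      ext l
      simp only [Finset.mem_filter, Finset.mem_univ, true_and, Finset.mem_insert]
      by_cases hl : l = i
      · subst hl; simp [hi]
      · rw [Function.update_of_ne hl]
        simp [hl]
    rw [this, Finset.card_insert_of_notMem (by simp)]

theorem sym_Alike_const_diag (D : ℕ) (hD : 0 < D) (B : Matrix (Vx D) (Vx D) ℝ)
    (hcomm : B * adjA D = adjA D * B)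
    (hvan : ∀ x y : Vx D, 2 ≤ hamming x y → B x y = 0)
    (hsym : Bᵀ = B) :
    ∀ x y : Vx D, B x x = B y y := by
  have key : ∀ n : ℕ, ∀ x y : Vx D, hamming x y = n → B x x = B y y := by
    intro n
    induction n with
    | zero => intro x y h; rw [hamming_eq_zero_iff.mp h]
    | succ n ih =>
      intro x y h
      have hne : ∃ i, x i ≠ y i := by
        by_contra hc
        push_neg at hc
        have : x = y := funext hc
        subst this
        rw [hamming_eq_zero_iff.mpr rfl] at h; omega
      obtain ⟨i, hi⟩ := hne
      obtain ⟨h1, h2⟩ := hamming_update x y i hi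
      have step1 : B x x = B (Function.update y i (x i)) (Function.update y i (x i)) :=
        ih x _ (by omega)
      have step2 : B (Function.update y i (x i)) (Function.update y i (x i)) = B y y :=
        adj_diag_eq B hcomm hvan h1
      rw [step1, step2]
  intro x y
  exact key (hamming x y) x y rfl
end

section
/- Let B be a symmetric A-like matrix for Q_D. Suppose x, z ∈ X are at distance 2 and y, w are the two common neighbors of x and z. Then B_{xy} = B_{zw} and B_{yz} = B_{wx}. -/
open Matrix BigOperators Finset

lemma fin2_aux : ∀ a b c : Fin 2, a ≠ b → a ≠ c → b = c := by decide

lemma ham_comm {D : ℕ} (x y : Vx D) : hamming x y = hamming y x := by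
  unfold hamming
  congr 1
  apply Finset.filter_congr
  intro i _
  simp [ne_comm]

lemma ham_zero {D : ℕ} {x y : Vx D} (h : hamming x y = 0) : x = y := by
  funext i
  by_contra hne
  have h2 := Finset.card_eq_zero.mp h
  rw [Finset.eq_empty_iff_forall_notMem] at h2
  exact h2 i (by simp [hne])

lemma eq_of_diffset_eq {D : ℕ} {x u v : Vx D}
    (h : Finset.univ.filter (fun i => x i ≠ u i) = Finset.univ.filter (fun i => x i ≠ v i)) :
    u = v := by
  funext i
  by_cases hi : x i = u i
  · have : i ∉ Finset.univ.filter (fun i => x i ≠ u i) := by simp [hi]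
    rw [h] at this
    simp at this
    rw [← hi, this]
  · have : i ∈ Finset.univ.filter (fun i => x i ≠ u i) := by simp [hi]
    rw [h] at this
    simp at this
    exact fin2_aux _ _ _ hi this

lemma diff_subset {D : ℕ} {x z v : Vx D} (hxz : hamming x z = 2)
    (hxv : hamming x v = 1) (hvz : hamming v z = 1) :
    Finset.univ.filter (fun i => x i ≠ v i) ⊆ Finset.univ.filter (fun i => x i ≠ z i) := by
  set S := Finset.univ.filter (fun i => x i ≠ v i)
  set R := Finset.univ.filter (fun i => v i ≠ z i)
  set T := Finset.univ.filter (fun i => x i ≠ z i)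
  have hsub : T ⊆ S ∪ R := by
    intro k hk
    simp only [T, S, R, Finset.mem_filter, Finset.mem_union, Finset.mem_univ, true_and] at hk ⊢
    by_contra hcon
    push_neg at hcon
    exact hk (hcon.1 ▸ hcon.2)
  have hcard : (S ∪ R).card ≤ 2 := by
    calc (S ∪ R).card ≤ S.card + R.card := Finset.card_union_le _ _
    _ = 2 := by rw [show S.card = hamming x v from rfl, show R.card = hamming v z from rfl, hxv, hvz]
  have hTcard : T.card = 2 := hxz
  have : T = S ∪ R := Finset.eq_of_subset_of_card_le hsub (by omega)
  rw [this]
  exact Finset.subset_union_left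

lemma common_nbr {D : ℕ} {x z y w u : Vx D} (hxz : hamming x z = 2) (hyw : y ≠ w)
    (hxy : hamming x y = 1) (hyz : hamming y z = 1)
    (hxw : hamming x w = 1) (hwz : hamming w z = 1)
    (hxu : hamming x u = 1) (huz : hamming u z = 1) : u = y ∨ u = w := by
  obtain ⟨a, ha⟩ := Finset.card_eq_one.mp hxy
  obtain ⟨b, hb⟩ := Finset.card_eq_one.mp hxw
  obtain ⟨c, hc⟩ := Finset.card_eq_one.mp hxu
  have hab : a ≠ b := by
    intro h
    exact hyw (eq_of_diffset_eq (ha.trans (h ▸ hb.symm)))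
  have haT := diff_subset hxz hxy hyz
  have hbT := diff_subset hxz hxw hwz
  have hcT := diff_subset hxz hxu huz
  rw [ha] at haT; rw [hb] at hbT; rw [hc] at hcT
  have haT' : a ∈ Finset.univ.filter (fun i => x i ≠ z i) := haT (by simp)
  have hbT' : b ∈ Finset.univ.filter (fun i => x i ≠ z i) := hbT (by simp)
  have hcT' : c ∈ Finset.univ.filter (fun i => x i ≠ z i) := hcT (by simp)
  have hTab : Finset.univ.filter (fun i => x i ≠ z i) = {a, b} := by
    symm
    apply Finset.eq_of_subset_of_card_le
    · intro k hk
      simp only [Finset.mem_insert, Finset.mem_singleton] at hk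
      rcases hk with h | h
      · exact h ▸ haT'
      · exact h ▸ hbT'
    · rw [show (Finset.univ.filter (fun i => x i ≠ z i)).card = hamming x z from rfl, hxz,
        Finset.card_insert_of_notMem (by simp [hab]), Finset.card_singleton]
  rw [hTab, Finset.mem_insert, Finset.mem_singleton] at hcT'
  rcases hcT' with h | h
  · left; exact eq_of_diffset_eq (hc.trans (h ▸ ha.symm))
  · right; exact eq_of_diffset_eq (hc.trans (h ▸ hb.symm))

lemma ham_two_of_nbrs {D : ℕ} {x y w : Vx D} (hyw : y ≠ w)
    (hxy : hamming x y = 1) (hxw : hamming x w = 1) : hamming y w = 2 := by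
  obtain ⟨a, ha⟩ := Finset.card_eq_one.mp hxy
  obtain ⟨b, hb⟩ := Finset.card_eq_one.mp hxw
  have hab : a ≠ b := by
    intro h
    exact hyw (eq_of_diffset_eq (ha.trans (h ▸ hb.symm)))
  have hmemS : ∀ k, x k ≠ y k ↔ k = a := by
    intro k
    constructor
    · intro hk
      have : k ∈ Finset.univ.filter (fun i => x i ≠ y i) := by simp [hk]
      rw [ha, Finset.mem_singleton] at this; exact this
    · intro hk
      have : k ∈ Finset.univ.filter (fun i => x i ≠ y i) := by rw [ha]; simp [hk]
      simpa using this
  have hmemR : ∀ k, x k ≠ w k ↔ k = b := by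
    intro k
    constructor
    · intro hk
      have : k ∈ Finset.univ.filter (fun i => x i ≠ w i) := by simp [hk]
      rw [hb, Finset.mem_singleton] at this; exact this
    · intro hk
      have : k ∈ Finset.univ.filter (fun i => x i ≠ w i) := by rw [hb]; simp [hk]
      simpa using this
  have : Finset.univ.filter (fun i => y i ≠ w i) = {a, b} := by
    ext k
    simp only [Finset.mem_filter, Finset.mem_univ, true_and, Finset.mem_insert,
      Finset.mem_singleton]
    constructor
    · intro hk
      by_contra hcon
      push_neg at hcon
      have h1 : x k = y k := by
        by_contra h; exact hcon.1 ((hmemS k).mp h)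
      have h2 : x k = w k := by
        by_contra h; exact hcon.2 ((hmemR k).mp h)
      exact hk (h1 ▸ h2)
    · rintro (rfl | rfl)
      · have h1 : x k ≠ y k := (hmemS k).mpr rfl
        have h2 : x k = w k := by
          by_contra h; exact hab ((hmemR k).mp h)
        rw [← h2]; exact fun h => h1 h.symm
      · have h1 : x k ≠ w k := (hmemR k).mpr rfl
        have h2 : x k = y k := by
          by_contra h; exact hab.symm ((hmemS k).mp h)
        rw [← h2]; exact h1
  rw [hamming, this, Finset.card_insert_of_notMem (by simp [hab]), Finset.card_singleton]

theorem sym_Alike_parallelogram (D : ℕ) (hD : 0 < D) (B : Matrix (Vx D) (Vx D) ℝ)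
    (hcomm : B * adjA D = adjA D * B)
    (hvan : ∀ x y : Vx D, 2 ≤ hamming x y → B x y = 0)
    (hsym : Bᵀ = B)
    (x z y w : Vx D) (hxz : hamming x z = 2) (hyw : y ≠ w)
    (hxy : hamming x y = 1) (hyz : hamming y z = 1)
    (hxw : hamming x w = 1) (hwz : hamming w z = 1) :
    B x y = B z w ∧ B y z = B w x := by
  have key : ∀ x z y w : Vx D, hamming x z = 2 → y ≠ w → hamming x y = 1 →
      hamming y z = 1 → hamming x w = 1 → hamming w z = 1 →
      B x y + B x w = B y z + B w z := by
    intro x z y w hxz hyw hxy hyz hxw hwz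
    have h1 : (B * adjA D) x z = B x y + B x w := by
      rw [Matrix.mul_apply]
      have hzero : ∀ u ∈ Finset.univ, u ∉ ({y, w} : Finset (Vx D)) →
          B x u * adjA D u z = 0 := by
        intro u _ hu
        simp only [Finset.mem_insert, Finset.mem_singleton] at hu
        push_neg at hu
        by_cases huz : hamming u z = 1
        · by_cases hxu : 2 ≤ hamming x u
          · rw [hvan x u hxu, zero_mul]
          · interval_cases h : hamming x u
            · exfalso; rw [ham_zero h] at hxz; omega
            · rcases common_nbr hxz hyw hxy hyz hxw hwz h huz with rfl | rfl
              · exact absurd rfl hu.1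
              · exact absurd rfl hu.2
        · simp [adjA, huz]
      rw [← Finset.sum_subset (Finset.subset_univ ({y, w} : Finset (Vx D))) hzero,
        Finset.sum_pair hyw]
      simp [adjA, hyz, hwz]
    have h2 : (adjA D * B) x z = B y z + B w z := by
      rw [Matrix.mul_apply]
      have hzero : ∀ u ∈ Finset.univ, u ∉ ({y, w} : Finset (Vx D)) →
          adjA D x u * B u z = 0 := by
        intro u _ hu
        simp only [Finset.mem_insert, Finset.mem_singleton] at hu
        push_neg at hu
        by_cases hxu : hamming x u = 1
        · by_cases huz : 2 ≤ hamming u z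
          · rw [hvan u z huz, mul_zero]
          · interval_cases h : hamming u z
            · exfalso; rw [ham_zero h] at hxu; omega
            · rcases common_nbr hxz hyw hxy hyz hxw hwz hxu h with rfl | rfl
              · exact absurd rfl hu.1
              · exact absurd rfl hu.2
        · simp [adjA, hxu]
      rw [← Finset.sum_subset (Finset.subset_univ ({y, w} : Finset (Vx D))) hzero,
        Finset.sum_pair hyw]
      simp [adjA, hxy, hxw]
    have := congrFun (congrFun hcomm x) z
    rw [h1, h2] at this
    linarith
  have hBsym : ∀ a b : Vx D, B a b = B b a := by
    intro a b
    have := congrFun (congrFun hsym a) b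
    simpa [Matrix.transpose_apply] using this.symm
  have hxz' : x ≠ z := by
    intro h
    rw [h] at hxz
    have : hamming z z = 0 := by simp [hamming]
    omega
  have hyw2 : hamming y w = 2 := ham_two_of_nbrs hyw hxy hxw
  have E1 := key x z y w hxz hyw hxy hyz hxw hwz
  have E2 := key y w x z hyw2 hxz' (ham_comm x y ▸ hxy) hxw hyz (ham_comm w z ▸ hwz)
  rw [hBsym y x] at E2
  rw [hBsym w z] at E1
  refine ⟨by linarith, ?_⟩
  rw [hBsym w x]
  linarith
end

section
/- For 1 ≤ i < j ≤ D, the matrix B_{ij} = α*_i A α*_j − α*_j A α*_i is an antisymmetric A-like matrix for Q_D: B_{ij}ᵗ = −B_{ij}, B_{ij} commutes with A, and its (x,y)-entry vanishes whenever x, y are neither equal nor adjacent. -/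
open Matrix BigOperators Finset

namespace BijAux

def flip {D : ℕ} (k : Fin D) (x : Vx D) : Vx D := Function.update x k (x k + 1)

lemma fin2_add_one_ne : ∀ a : Fin 2, a + 1 ≠ a := by decide
lemma fin2_ne_iff : ∀ a b : Fin 2, a ≠ b ↔ a + 1 = b := by decide
lemma fin2_flip_iff : ∀ a b : Fin 2, (a + 1 ≠ b ↔ a ≠ b + 1) := by decide

lemma flip_self {D} (k : Fin D) (x : Vx D) : flip k x k = x k + 1 :=
  Function.update_self _ _ _

lemma flip_ne {D} {k l : Fin D} (h : l ≠ k) (x : Vx D) : flip k x l = x l :=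
  Function.update_of_ne h _ _

lemma hamming_comm {D} (x y : Vx D) : hamming x y = hamming y x := by
  unfold hamming; congr 1; ext l; simp [ne_comm]

lemma hamming_self {D} (x : Vx D) : hamming x x = 0 := by
  simp [hamming]

lemma hamming_zero {D} {x y : Vx D} (h : hamming x y = 0) : x = y := by
  unfold hamming at h
  rw [Finset.card_eq_zero, Finset.filter_eq_empty_iff] at h
  funext l
  have := h (Finset.mem_univ l)
  simpa using this

lemma hamming_flip_eq {D} {k : Fin D} {x z : Vx D} (h : x k = z k) :
    hamming (flip k x) z = hamming x z + 1 := by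
  unfold hamming
  have hset : (Finset.univ.filter fun l => flip k x l ≠ z l)
      = insert k (Finset.univ.filter fun l => x l ≠ z l) := by
    ext l
    by_cases hl : l = k
    · subst hl
      simp [flip_self, ← h, (fin2_add_one_ne (x l))]
    · simp [flip_ne hl, hl]
  rw [hset, Finset.card_insert_of_notMem (by simp [h])]

lemma hamming_flip_ne {D} {k : Fin D} {x z : Vx D} (h : x k ≠ z k) :
    hamming x z = hamming (flip k x) z + 1 := by
  unfold hamming
  have hset : (Finset.univ.filter fun l => x l ≠ z l)
      = insert k (Finset.univ.filter fun l => flip k x l ≠ z l) := by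
    ext l
    by_cases hl : l = k
    · subst hl; simp [h]
    · simp [flip_ne hl, hl]
  rw [hset, Finset.card_insert_of_notMem]
  simp [flip_self, (fin2_ne_iff _ _).1 h]

lemma hamming_x_flip {D} (k : Fin D) (x : Vx D) : hamming x (flip k x) = 1 := by
  rw [hamming_comm, hamming_flip_eq rfl, hamming_self]

lemma hamming_swap {D} (k : Fin D) (x z : Vx D) :
    hamming (flip k x) z = hamming x (flip k z) := by
  unfold hamming; congr 1; ext l
  by_cases hl : l = k
  · subst hl; simp [flip_self, fin2_flip_iff]
  · simp [flip_ne hl]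

lemma flip_inj {D} {k l : Fin D} {x : Vx D} (h : flip k x = flip l x) : k = l := by
  by_contra hkl
  have h1 : flip k x k = x k + 1 := flip_self k x
  have h2 : flip l x k = x k := flip_ne hkl x
  rw [h] at h1
  rw [h2] at h1
  exact fin2_add_one_ne (x k) h1.symm

lemma eq_flip_of_hamming_one {D} {x y : Vx D} (h : hamming x y = 1) :
    ∃ k, y = flip k x := by
  unfold hamming at h
  obtain ⟨k, hk⟩ := Finset.card_eq_one.1 h
  refine ⟨k, ?_⟩
  funext l
  by_cases hl : l = k
  · subst hl
    have : l ∈ Finset.univ.filter fun i => x i ≠ y i := by rw [hk]; simp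
    have hne : x l ≠ y l := by simpa using this
    rw [flip_self, (fin2_ne_iff _ _).1 hne]
  · have : l ∉ Finset.univ.filter fun i => x i ≠ y i := by rw [hk]; simp [hl]
    have heq : x l = y l := by simpa using this
    rw [flip_ne hl, heq]

lemma sum_adj {D : ℕ} (x : Vx D) (g : Vx D → ℝ) :
    ∑ y, adjA D x y * g y = ∑ k : Fin D, g (flip k x) := by
  have h1 : ∑ y, adjA D x y * g y
      = ∑ y ∈ Finset.univ.filter (fun y => hamming x y = 1), g y := by
    rw [Finset.sum_filter]
    refine Finset.sum_congr rfl fun y _ => ?_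
    simp only [adjA]
    split <;> simp
  rw [h1]
  refine (Finset.sum_bij (fun k _ => flip k x) ?_ ?_ ?_ ?_).symm
  · intro k _; simp [hamming_x_flip]
  · intro a _ b _ h; exact flip_inj h
  · intro y hy
    simp only [Finset.mem_filter] at hy
    obtain ⟨k, hk⟩ := eq_flip_of_hamming_one hy.2
    exact ⟨k, Finset.mem_univ k, hk.symm⟩
  · intro k _; rfl

lemma negpow_flip (a : Fin 2) : ((-1:ℝ))^(((a+1 : Fin 2) : ℕ)) = -(-1:ℝ)^((a:ℕ)) := by
  fin_cases a <;> simp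

lemma negpow_ne {a b : Fin 2} (h : a ≠ b) : ((-1:ℝ))^((a:ℕ)) = -(-1:ℝ)^((b:ℕ)) := by
  fin_cases a <;> fin_cases b <;> simp_all

lemma key {D} {k l : Fin D} (hkl : k ≠ l) {x z : Vx D}
    (h1 : hamming (flip k x) z = 1) (h2 : hamming (flip l x) z ≠ 1) :
    x k ≠ z k ∧ x l = z l := by
  by_cases hk : x k = z k
  · exfalso
    have e1 := hamming_flip_eq hk
    have hxz : x = z := hamming_zero (by omega)
    subst hxz
    exact h2 (by rw [hamming_flip_eq rfl, hamming_self])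
  · refine ⟨hk, ?_⟩
    by_cases hl : x l = z l
    · exact hl
    · exfalso
      have e1 := hamming_flip_ne hk
      have e2 := hamming_flip_ne hl
      exact h2 (by omega)

lemma B_apply {D} (i j : Fin D) (x y : Vx D) :
    (alphaStar i * adjA D * alphaStar j - alphaStar j * adjA D * alphaStar i) x y =
      adjA D x y * ((-1:ℝ)^((x i:ℕ)) * (-1:ℝ)^((y j:ℕ)) - (-1:ℝ)^((x j:ℕ)) * (-1:ℝ)^((y i:ℕ))) := by
  simp only [alphaStar, Matrix.sub_apply, Matrix.mul_diagonal, Matrix.diagonal_mul]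
  ring

lemma adjA_symm {D} (x y : Vx D) : adjA D y x = adjA D x y := by
  simp only [adjA, hamming_comm y x]


noncomputable def cf {D : ℕ} (i j : Fin D) (u v : Vx D) : ℝ :=
  (-1:ℝ)^((u i:ℕ)) * (-1:ℝ)^((v j:ℕ)) - (-1:ℝ)^((u j:ℕ)) * (-1:ℝ)^((v i:ℕ))

lemma B_apply' {D} (i j : Fin D) (x y : Vx D) :
    (alphaStar i * adjA D * alphaStar j - alphaStar j * adjA D * alphaStar i) x y =
      adjA D x y * cf i j x y := B_apply i j x y

lemma cf_flip_right_i {D} {i j : Fin D} (hij : i ≠ j) (x : Vx D) :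
    cf i j x (flip i x) = 2 * ((-1:ℝ)^((x i:ℕ)) * (-1:ℝ)^((x j:ℕ))) := by
  unfold cf
  rw [flip_ne (Ne.symm hij), flip_self, negpow_flip]
  ring

lemma cf_flip_right_j {D} {i j : Fin D} (hij : i ≠ j) (x : Vx D) :
    cf i j x (flip j x) = -2 * ((-1:ℝ)^((x i:ℕ)) * (-1:ℝ)^((x j:ℕ))) := by
  unfold cf
  rw [flip_ne hij, flip_self, negpow_flip]
  ring

lemma cf_flip_right_other {D} {i j k : Fin D} (hki : k ≠ i) (hkj : k ≠ j) (x : Vx D) :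
    cf i j x (flip k x) = 0 := by
  unfold cf
  rw [flip_ne (Ne.symm hki), flip_ne (Ne.symm hkj)]
  ring

lemma cf_flip_left_i {D} {i j : Fin D} (hij : i ≠ j) (z : Vx D) :
    cf i j (flip i z) z = -2 * ((-1:ℝ)^((z i:ℕ)) * (-1:ℝ)^((z j:ℕ))) := by
  unfold cf
  rw [flip_ne (Ne.symm hij), flip_self, negpow_flip]
  ring

lemma cf_flip_left_j {D} {i j : Fin D} (hij : i ≠ j) (z : Vx D) :
    cf i j (flip j z) z = 2 * ((-1:ℝ)^((z i:ℕ)) * (-1:ℝ)^((z j:ℕ))) := by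
  unfold cf
  rw [flip_ne hij, flip_self, negpow_flip]
  ring

lemma cf_flip_left_other {D} {i j k : Fin D} (hki : k ≠ i) (hkj : k ≠ j) (z : Vx D) :
    cf i j (flip k z) z = 0 := by
  unfold cf
  rw [flip_ne (Ne.symm hki), flip_ne (Ne.symm hkj)]
  ring

lemma adjA_swap {D} (k : Fin D) (x z : Vx D) :
    adjA D x (flip k z) = adjA D (flip k x) z := by
  simp only [adjA, ← hamming_swap]


end BijAux

theorem Bij_is_antisym_Alike (D : ℕ) (hD : 0 < D) (i j : Fin D) (hij : i < j) :
    (alphaStar i * adjA D * alphaStar j - alphaStar j * adjA D * alphaStar i)ᵀ =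
      -(alphaStar i * adjA D * alphaStar j - alphaStar j * adjA D * alphaStar i) ∧
    (alphaStar i * adjA D * alphaStar j - alphaStar j * adjA D * alphaStar i) * adjA D =
      adjA D * (alphaStar i * adjA D * alphaStar j - alphaStar j * adjA D * alphaStar i) ∧
    (∀ x y : Vx D, 2 ≤ hamming x y →
      (alphaStar i * adjA D * alphaStar j - alphaStar j * adjA D * alphaStar i) x y = 0) := by
  have hij' : i ≠ j := ne_of_lt hij
  refine ⟨?_, ?_, ?_⟩
  · ext x y
    simp only [Matrix.transpose_apply, Matrix.neg_apply]
    rw [BijAux.B_apply, BijAux.B_apply, BijAux.adjA_symm]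
    ring
  · ext x z
    rw [Matrix.mul_apply, Matrix.mul_apply]
    have hL : (∑ y, (alphaStar i * adjA D * alphaStar j - alphaStar j * adjA D * alphaStar i) x y * adjA D y z)
        = 2 * ((-1:ℝ)^((x i:ℕ)) * (-1:ℝ)^((x j:ℕ))) * adjA D (BijAux.flip i x) z
          - 2 * ((-1:ℝ)^((x i:ℕ)) * (-1:ℝ)^((x j:ℕ))) * adjA D (BijAux.flip j x) z := by
      calc (∑ y, (alphaStar i * adjA D * alphaStar j - alphaStar j * adjA D * alphaStar i) x y * adjA D y z)
          = ∑ y, adjA D x y * (BijAux.cf i j x y * adjA D y z) := by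
            refine Finset.sum_congr rfl fun y _ => ?_
            rw [BijAux.B_apply']
            ring
        _ = ∑ k : Fin D, BijAux.cf i j x (BijAux.flip k x) * adjA D (BijAux.flip k x) z :=
            BijAux.sum_adj x _
        _ = ∑ k ∈ ({i, j} : Finset (Fin D)), BijAux.cf i j x (BijAux.flip k x) * adjA D (BijAux.flip k x) z := by
            symm
            apply Finset.sum_subset (Finset.subset_univ _)
            intro k _ hk
            simp only [Finset.mem_insert, Finset.mem_singleton, not_or] at hk
            rw [BijAux.cf_flip_right_other hk.1 hk.2, zero_mul]
        _ = _ := by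
            rw [Finset.sum_pair hij', BijAux.cf_flip_right_i hij', BijAux.cf_flip_right_j hij']
            ring
    have hR : (∑ y, adjA D x y * (alphaStar i * adjA D * alphaStar j - alphaStar j * adjA D * alphaStar i) y z)
        = -(2 * ((-1:ℝ)^((z i:ℕ)) * (-1:ℝ)^((z j:ℕ)))) * adjA D (BijAux.flip i x) z
          + 2 * ((-1:ℝ)^((z i:ℕ)) * (-1:ℝ)^((z j:ℕ))) * adjA D (BijAux.flip j x) z := by
      calc (∑ y, adjA D x y * (alphaStar i * adjA D * alphaStar j - alphaStar j * adjA D * alphaStar i) y z)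
          = ∑ y, adjA D z y * (adjA D x y * BijAux.cf i j y z) := by
            refine Finset.sum_congr rfl fun y _ => ?_
            rw [BijAux.B_apply', BijAux.adjA_symm z y]
            ring
        _ = ∑ k : Fin D, adjA D x (BijAux.flip k z) * BijAux.cf i j (BijAux.flip k z) z :=
            BijAux.sum_adj z _
        _ = ∑ k ∈ ({i, j} : Finset (Fin D)), adjA D x (BijAux.flip k z) * BijAux.cf i j (BijAux.flip k z) z := by
            symm
            apply Finset.sum_subset (Finset.subset_univ _)
            intro k _ hk
            simp only [Finset.mem_insert, Finset.mem_singleton, not_or] at hk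
            rw [BijAux.cf_flip_left_other hk.1 hk.2, mul_zero]
        _ = _ := by
            rw [Finset.sum_pair hij', BijAux.cf_flip_left_i hij', BijAux.cf_flip_left_j hij',
              BijAux.adjA_swap, BijAux.adjA_swap]
            ring
    rw [hL, hR]
    by_cases ha : hamming (BijAux.flip i x) z = 1 <;>
      by_cases hb : hamming (BijAux.flip j x) z = 1
    · simp only [adjA, if_pos ha, if_pos hb]
      ring
    · obtain ⟨h1, h2⟩ := BijAux.key hij' ha hb
      simp only [adjA, if_pos ha, if_neg hb]
      rw [BijAux.negpow_ne h1, h2]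
      ring
    · obtain ⟨h1, h2⟩ := BijAux.key (Ne.symm hij') hb ha
      simp only [adjA, if_neg ha, if_pos hb]
      rw [BijAux.negpow_ne h1, h2]
      ring
    · simp only [adjA, if_neg ha, if_neg hb]
      ring
  · intro x y h
    rw [BijAux.B_apply]
    have h0 : adjA D x y = 0 := by
      simp only [adjA]
      rw [if_neg]
      omega
    rw [h0, zero_mul]
end

section
/- The matrices α*_i A α*_j − α*_j A α*_i (1 ≤ i < j ≤ D) form a basis of the space of antisymmetric A-like matrices for Q_D; in particular this space has dimension binom(D,2). Consequently the space of all A-like matrices for Q_D has dimension 1 + D + binom(D,2). -/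
/-!
Write `A = ∑ α_i`, so that `(B A)_{x,z} = ∑_i B_{x,z+e_i}` and `(A B)_{x,z} = ∑_i B_{x+e_i,z}`.
For `B` supported at distance `≤ 1` this makes commutation with `A` local: the diagonal of `B`
is constant, and the edge functions `f_k x = B_{x,x+e_k}` satisfy `∂_m f_n = -∂_n f_m` for
`m ≠ n` and `∑_k ∂_k f_k = 0`, where `∂_m g x = g (x+e_m) - g x`. Since the `∂`'s commute,
swapping indices gives `∂_m ∂_l f_k = 0` for distinct `k, l, m`, so `∂_l f_k` is a multiple of
`(-1)^(x_k + x_l)` and is determined by its value at `0`. Subtracting a combination of the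
matrices `α*_k A α*_l - α*_l A α*_k` kills these values; then every `∂_l f_k` with `l ≠ k`
vanishes, the condition `∑_k ∂_k f_k = 0` forces `∂_k f_k = 0`, and what is left is
`c I + ∑ a_k α_k`. The functional `B ↦ B_{0,e_k} - B_{e_l,e_k+e_l}` vanishes on `I` and the
`α_i` and isolates the `(k, l)` matrix, which gives linear independence. As `I` and the `α_i`
are symmetric while the others are antisymmetric, the antisymmetric A-like matrices are exactly
the span of the latter.
-/

open Matrix BigOperators Finset

namespace Hypercube

variable {D : ℕ}

def flip (k : Fin D) (x : Vx D) : Vx D := Function.update x k (1 - x k)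

@[simp] lemma flip_apply_self (k : Fin D) (x : Vx D) : flip k x k = 1 - x k := by
  simp [flip]

lemma flip_apply_of_ne (k : Fin D) (x : Vx D) {j : Fin D} (h : j ≠ k) : flip k x j = x j :=
  Function.update_of_ne h _ _

lemma _root_.Fin.two_one_sub_ne (a : Fin 2) : 1 - a ≠ a := by revert a; decide

@[simp] lemma flip_flip (k : Fin D) (x : Vx D) : flip k (flip k x) = x := by
  funext j
  by_cases h : j = k
  · subst h
    simp only [flip_apply_self]
    generalize x j = a; revert a; decide
  · simp [flip_apply_of_ne _ _ h]

lemma flip_comm (k l : Fin D) (x : Vx D) : flip k (flip l x) = flip l (flip k x) := by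
  rcases eq_or_ne k l with rfl | hkl
  · rfl
  simp only [flip, Function.update_of_ne hkl, Function.update_of_ne hkl.symm]
  exact (Function.update_comm hkl _ _ _).symm

lemma flip_ne_self (k : Fin D) (x : Vx D) : flip k x ≠ x :=
  fun h => (x k).two_one_sub_ne (by simpa using congrFun h k)

lemma eq_of_flip_eq_flip {k l : Fin D} {x : Vx D} (h : flip k x = flip l x) : k = l := by
  by_contra hkl
  have := congrFun h k
  rw [flip_apply_self, flip_apply_of_ne _ _ hkl] at this
  exact (x k).two_one_sub_ne this

lemma eq_flip_comm {k : Fin D} {x y : Vx D} : y = flip k x ↔ x = flip k y := by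
  constructor <;> rintro rfl <;> simp

lemma hamming_comm (x y : Vx D) : hamming x y = hamming y x := by
  simp only [hamming, ne_comm]

@[simp] lemma hamming_self (x : Vx D) : hamming x x = 0 := by
  simp [hamming]

lemma hamming_eq_zero_iff {x y : Vx D} : hamming x y = 0 ↔ x = y := by
  simp [hamming, Finset.filter_eq_empty_iff, funext_iff]

lemma hamming_flip_of_eq {x y : Vx D} {k : Fin D} (h : x k = y k) :
    hamming x (flip k y) = hamming x y + 1 := by
  have hset : univ.filter (fun i => x i ≠ flip k y i) =
      insert k (univ.filter (fun i => x i ≠ y i)) := by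
    ext i
    rcases eq_or_ne i k with rfl | hik
    · simpa [h] using (y i).two_one_sub_ne.symm
    · simp [flip_apply_of_ne _ _ hik, hik]
  rw [hamming, hset, card_insert_of_notMem (by simp [h]), hamming]

lemma hamming_flip_of_ne {x y : Vx D} {k : Fin D} (h : x k ≠ y k) :
    hamming x (flip k y) + 1 = hamming x y := by
  have hk : x k = flip k y k := by
    revert h; rw [flip_apply_self]; generalize x k = a; generalize y k = b; revert a b; decide
  simpa using (hamming_flip_of_eq hk).symm

@[simp] lemma hamming_flip_self (x : Vx D) (k : Fin D) : hamming x (flip k x) = 1 := by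
  simp [hamming_flip_of_eq rfl]

lemma hamming_flip_flip {k l : Fin D} (hkl : k ≠ l) (x : Vx D) :
    hamming x (flip k (flip l x)) = 2 := by
  rw [hamming_flip_of_eq (flip_apply_of_ne l x hkl).symm, hamming_flip_self]

lemma exists_hamming_flip_of_hamming_eq_succ {x y : Vx D} {n : ℕ} (h : hamming x y = n + 1) :
    ∃ k, hamming x (flip k y) = n := by
  obtain ⟨k, hk⟩ := Finset.card_pos.mp (h ▸ n.succ_pos : 0 < hamming x y)
  exact ⟨k, by have := hamming_flip_of_ne (mem_filter.mp hk).2; omega⟩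

lemma hamming_eq_one_iff {x y : Vx D} : hamming x y = 1 ↔ ∃ k, y = flip k x := by
  refine ⟨fun h => ?_, fun ⟨k, hk⟩ => hk ▸ hamming_flip_self x k⟩
  obtain ⟨k, hk⟩ := exists_hamming_flip_of_hamming_eq_succ h
  exact ⟨k, eq_flip_comm.mp (hamming_eq_zero_iff.mp hk)⟩

lemma hamming_eq_two_iff {x y : Vx D} :
    hamming x y = 2 ↔ ∃ k l, k ≠ l ∧ y = flip k (flip l x) := by
  refine ⟨fun h => ?_, fun ⟨k, l, hkl, hy⟩ => hy ▸ hamming_flip_flip hkl x⟩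
  obtain ⟨k, hk⟩ := exists_hamming_flip_of_hamming_eq_succ h
  obtain ⟨l, hl⟩ := hamming_eq_one_iff.mp hk
  have hy : y = flip k (flip l x) := eq_flip_comm.mp hl.symm
  refine ⟨k, l, fun hkl => ?_, hy⟩
  simp [hy, hkl] at h

theorem flip_induction {P : Vx D → Prop} (x₀ : Vx D) (h₀ : P x₀)
    (hflip : ∀ k x, P x → P (flip k x)) (x : Vx D) : P x := by
  induction hn : hamming x₀ x generalizing x with
  | zero => exact hamming_eq_zero_iff.mp hn ▸ h₀
  | succ n ih =>
    obtain ⟨k, hk⟩ := exists_hamming_flip_of_hamming_eq_succ hn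
    simpa using hflip k _ (ih _ hk)

def flipDiff (m : Fin D) (g : Vx D → ℝ) (x : Vx D) : ℝ := g (flip m x) - g x

lemma flipDiff_apply_flip (m : Fin D) (g : Vx D → ℝ) (x : Vx D) :
    flipDiff m g (flip m x) = -flipDiff m g x := by
  simp [flipDiff]

lemma flipDiff_neg (m : Fin D) (g : Vx D → ℝ) : flipDiff m (-g) = -flipDiff m g := by
  funext x; simp only [flipDiff, Pi.neg_apply]; ring

lemma flipDiff_comm (m l : Fin D) (g : Vx D → ℝ) :
    flipDiff m (flipDiff l g) = flipDiff l (flipDiff m g) := by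
  funext x; simp only [flipDiff, flip_comm m l]; ring

lemma eq_apply_zero_of_flipDiff_eq_zero {g : Vx D → ℝ} (h : ∀ m, flipDiff m g = 0) (x : Vx D) :
    g x = g 0 := by
  refine flip_induction (P := fun x => g x = g 0) 0 rfl (fun m y hy => ?_) x
  have := congrFun (h m) y
  simp only [flipDiff, Pi.zero_apply] at this
  linarith

section Rigidity

variable {f : Fin D → Vx D → ℝ}

lemma flipDiff_flipDiff_eq_zero (hanti : ∀ m n, m ≠ n → flipDiff m (f n) = -flipDiff n (f m))
    {k l m : Fin D} (hkl : k ≠ l) (hkm : k ≠ m) (hlm : l ≠ m) :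
    flipDiff m (flipDiff l (f k)) = 0 := by
  -- commuting the two differences and swapping indices with `hanti` six times returns a sign
  have h : flipDiff m (flipDiff l (f k)) = -flipDiff m (flipDiff l (f k)) := calc
    flipDiff m (flipDiff l (f k)) = -flipDiff m (flipDiff k (f l)) := by
      rw [hanti l k hkl.symm, flipDiff_neg]
    _ = -flipDiff k (flipDiff m (f l)) := by rw [flipDiff_comm]
    _ = flipDiff k (flipDiff l (f m)) := by rw [hanti m l hlm.symm, flipDiff_neg, neg_neg]
    _ = flipDiff l (flipDiff k (f m)) := flipDiff_comm _ _ _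
    _ = -flipDiff l (flipDiff m (f k)) := by rw [hanti k m hkm, flipDiff_neg]
    _ = -flipDiff m (flipDiff l (f k)) := by rw [flipDiff_comm]
  funext x
  have := congrFun h x
  simp only [Pi.neg_apply] at this
  simp only [Pi.zero_apply]
  linarith

theorem eq_apply_zero_of_flipDiff_antisymm
    (hanti : ∀ m n, m ≠ n → flipDiff m (f n) = -flipDiff n (f m))
    (hsum : ∀ x, ∑ k, flipDiff k (f k) x = 0)
    (h₀ : ∀ k l, k < l → flipDiff l (f k) 0 = 0) (k : Fin D) (x : Vx D) : f k x = f k 0 := by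
  have h₀' : ∀ k l, k ≠ l → flipDiff l (f k) 0 = 0 := by
    intro k l hkl
    rcases hkl.lt_or_gt with hlt | hgt
    · exact h₀ k l hlt
    · rw [hanti l k hkl.symm, Pi.neg_apply, h₀ l k hgt, neg_zero]
  -- `flipDiff l (f k)` changes at most its sign under each flip, so it vanishes if it does at `0`
  have hcross : ∀ k l, k ≠ l → flipDiff l (f k) = 0 := by
    intro k l hkl
    funext x
    refine flip_induction (P := fun x => flipDiff l (f k) x = 0) 0 (h₀' k l hkl)
      (fun m y hy => ?_) x
    rcases eq_or_ne m l with rfl | hml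
    · rw [flipDiff_apply_flip, hy, neg_zero]
    rcases eq_or_ne m k with rfl | hmk
    · rw [hanti l m (Ne.symm hml)] at hy ⊢
      simpa only [Pi.neg_apply, flipDiff_apply_flip, neg_neg, neg_eq_zero] using hy
    · have := congrFun (flipDiff_flipDiff_eq_zero hanti hkl hmk.symm hml.symm) y
      change flipDiff l (f k) (flip m y) - flipDiff l (f k) y = 0 at this
      linarith
  -- flipping `x_t` negates the `t`-th summand of `hsum` and fixes the others
  have hdiag : ∀ t, flipDiff t (f t) = 0 := by
    intro t
    funext x
    have hfix : ∀ k, k ≠ t → flipDiff k (f k) (flip t x) - flipDiff k (f k) x = 0 := by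
      intro k hkt
      have hinv : ∀ y, f k (flip t y) = f k y := fun y => by
        have := congrFun (hcross k t hkt) y
        simp only [flipDiff, Pi.zero_apply] at this
        linarith
      simp only [flipDiff, flip_comm k t, hinv, sub_self]
    have := Fintype.sum_eq_single t hfix
    rw [Finset.sum_sub_distrib, hsum, hsum, flipDiff_apply_flip] at this
    simp only [Pi.zero_apply]
    linarith
  exact eq_apply_zero_of_flipDiff_eq_zero
    (fun m => (eq_or_ne k m).elim (fun h => h ▸ hdiag k) (hcross k m)) x

end Rigidity

lemma alpha_apply (i : Fin D) (x y : Vx D) : alpha i x y = if y = flip i x then 1 else 0 := by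
  unfold alpha
  congr 1
  refine propext ⟨fun ⟨hi, hj⟩ => funext fun j => ?_, ?_⟩
  · rcases eq_or_ne j i with rfl | hji
    · rw [flip_apply_self]
      revert hi; generalize x j = a; generalize y j = b; revert a b; decide
    · rw [flip_apply_of_ne _ _ hji, hj j hji]
  · rintro rfl
    exact ⟨by simpa using (x i).two_one_sub_ne.symm, fun j hj => (flip_apply_of_ne _ _ hj).symm⟩

lemma alpha_apply_flip (i k : Fin D) (x : Vx D) :
    alpha i x (flip k x) = if k = i then 1 else 0 := by
  rw [alpha_apply]
  exact if_congr ⟨fun h => eq_of_flip_eq_flip h, fun h => h ▸ rfl⟩ rfl rfl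

lemma alpha_apply_self (i : Fin D) (x : Vx D) : alpha i x x = 0 := by
  rw [alpha_apply, if_neg (flip_ne_self i x).symm]

lemma alpha_transpose (i : Fin D) : (alpha i)ᵀ = alpha i := by
  ext x y
  simp only [transpose_apply, alpha_apply, eq_flip_comm]

lemma mul_alpha_apply (M : Matrix (Vx D) (Vx D) ℝ) (i : Fin D) (x z : Vx D) :
    (M * alpha i) x z = M x (flip i z) := by
  rw [mul_apply, Fintype.sum_eq_single (flip i z) fun y hy => by
    rw [alpha_apply, if_neg fun h => hy (eq_flip_comm.mp h), mul_zero]]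
  simp [alpha_apply]

lemma alpha_mul_apply (M : Matrix (Vx D) (Vx D) ℝ) (i : Fin D) (x z : Vx D) :
    (alpha i * M) x z = M (flip i x) z := by
  simp [mul_apply, alpha_apply]

theorem adjA_eq_sum_alpha : adjA D = ∑ i, alpha i := by
  ext x y
  simp only [adjA, Matrix.sum_apply, alpha_apply]
  split_ifs with h
  · obtain ⟨k, rfl⟩ := hamming_eq_one_iff.mp h
    rw [Fintype.sum_eq_single k fun l hl => if_neg fun h => hl (eq_of_flip_eq_flip h).symm,
      if_pos rfl]
  · exact (Finset.sum_eq_zero fun k _ => if_neg fun hk => h (hamming_eq_one_iff.mpr ⟨k, hk⟩)).symm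

lemma mul_adjA_apply (M : Matrix (Vx D) (Vx D) ℝ) (x z : Vx D) :
    (M * adjA D) x z = ∑ k, M x (flip k z) := by
  simp [adjA_eq_sum_alpha, Matrix.mul_sum, Matrix.sum_apply, mul_alpha_apply]

lemma adjA_mul_apply (M : Matrix (Vx D) (Vx D) ℝ) (x z : Vx D) :
    (adjA D * M) x z = ∑ k, M (flip k x) z := by
  simp [adjA_eq_sum_alpha, Matrix.sum_mul, Matrix.sum_apply, alpha_mul_apply]

def IsLocal (B : Matrix (Vx D) (Vx D) ℝ) : Prop :=
  ∀ x y : Vx D, 2 ≤ hamming x y → B x y = 0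

def edge (B : Matrix (Vx D) (Vx D) ℝ) (k : Fin D) (x : Vx D) : ℝ := B x (flip k x)

namespace IsLocal

variable {B M N : Matrix (Vx D) (Vx D) ℝ}

lemma transpose (hB : IsLocal B) : IsLocal Bᵀ :=
  fun x y h => hB y x (hamming_comm x y ▸ h)

lemma ext (hM : IsLocal M) (hN : IsLocal N) (hdiag : ∀ x, M x x = N x x)
    (hedge : ∀ k x, edge M k x = edge N k x) : M = N := by
  ext x y
  rcases lt_or_ge (hamming x y) 2 with h | h
  · interval_cases hxy : hamming x y
    · rw [hamming_eq_zero_iff.mp hxy]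
      exact hdiag y
    · obtain ⟨k, rfl⟩ := hamming_eq_one_iff.mp hxy
      exact hedge k x
  · rw [hM x y h, hN x y h]

lemma sum_apply_flip_flip (hB : IsLocal B) (m : Fin D) (x : Vx D) :
    ∑ k, B x (flip k (flip m x)) = B x x := by
  rw [Fintype.sum_eq_single m fun k hk => hB _ _ (hamming_flip_flip hk x).ge, flip_flip]

lemma sum_apply_flip_flip_flip (hB : IsLocal B) {m n : Fin D} (hmn : m ≠ n) (x : Vx D) :
    ∑ k, B x (flip k (flip m (flip n x))) = edge B n x + edge B m x := by
  rw [Fintype.sum_eq_add m n hmn fun k ⟨hkm, hkn⟩ => hB _ _ ?_, flip_flip, flip_comm n m,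
    flip_flip]
  · rfl
  have hk : x k = flip m (flip n x) k := by
    rw [flip_apply_of_ne _ _ hkm, flip_apply_of_ne _ _ hkn]
  rw [hamming_flip_of_eq hk, hamming_flip_flip hmn]
  omega

lemma sum_apply_flip_eq_zero (hB : IsLocal B) {x z : Vx D} (h : 3 ≤ hamming x z) :
    ∑ k, B x (flip k z) = 0 := by
  refine Finset.sum_eq_zero fun k _ => hB _ _ ?_
  by_cases hk : x k = z k
  · rw [hamming_flip_of_eq hk]; omega
  · have := hamming_flip_of_ne hk; omega

lemma sum_flip_apply_flip (hB : IsLocal B) (m : Fin D) (x : Vx D) :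
    ∑ k, B (flip k x) (flip m x) = B (flip m x) (flip m x) := by
  simpa using hB.transpose.sum_apply_flip_flip m (flip m x)

lemma sum_flip_apply_flip_flip (hB : IsLocal B) {m n : Fin D} (hmn : m ≠ n) (x : Vx D) :
    ∑ k, B (flip k x) (flip m (flip n x)) = edge B m (flip n x) + edge B n (flip m x) := by
  simpa [edge, flip_comm m n] using
    hB.transpose.sum_apply_flip_flip_flip hmn.symm (flip m (flip n x))

lemma sum_flip_apply_eq_zero (hB : IsLocal B) {x z : Vx D} (h : 3 ≤ hamming x z) :
    ∑ k, B (flip k x) z = 0 :=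
  hB.transpose.sum_apply_flip_eq_zero (hamming_comm x z ▸ h)

-- Commutation with `A` read off entrywise at distance `0`, `1`, `2`; at distance `≥ 3` it is
-- automatic.
theorem commute_adjA_iff (hB : IsLocal B) :
    B * adjA D = adjA D * B ↔
      (∀ x, ∑ k, flipDiff k (edge B k) x = 0) ∧
      (∀ k x, B (flip k x) (flip k x) = B x x) ∧
      (∀ m n, m ≠ n → flipDiff m (edge B n) = -flipDiff n (edge B m)) := by
  have hsum_iff : ∀ x, (∑ k, B x (flip k x) = ∑ k, B (flip k x) x) ↔
      ∑ k, flipDiff k (edge B k) x = 0 := fun x => by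
    simp only [flipDiff, edge, Finset.sum_sub_distrib, flip_flip, sub_eq_zero]
    exact eq_comm
  have hanti_iff : ∀ m n x, flipDiff m (edge B n) x = -flipDiff n (edge B m) x ↔
      edge B n x + edge B m x = edge B m (flip n x) + edge B n (flip m x) := fun m n x => by
    simp only [flipDiff]
    constructor <;> intro h <;> linarith
  simp only [← Matrix.ext_iff, mul_adjA_apply, adjA_mul_apply]
  constructor
  · intro h
    refine ⟨fun x => (hsum_iff x).mp (h x x), fun k x => ?_, fun m n hmn => funext fun x => ?_⟩
    · simpa [hB.sum_apply_flip_flip, hB.sum_flip_apply_flip] using (h x (flip k x)).symm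
    · simpa [hanti_iff, hB.sum_apply_flip_flip_flip hmn, hB.sum_flip_apply_flip_flip hmn]
        using h x (flip m (flip n x))
  · rintro ⟨hsum, hdiag, hanti⟩ x z
    rcases lt_or_ge (hamming x z) 3 with h | h
    · interval_cases hxz : hamming x z
      · obtain rfl := hamming_eq_zero_iff.mp hxz
        exact (hsum_iff x).mpr (hsum x)
      · obtain ⟨m, rfl⟩ := hamming_eq_one_iff.mp hxz
        rw [hB.sum_apply_flip_flip, hB.sum_flip_apply_flip, hdiag]
      · obtain ⟨m, n, hmn, rfl⟩ := hamming_eq_two_iff.mp hxz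
        rw [hB.sum_apply_flip_flip_flip hmn, hB.sum_flip_apply_flip_flip hmn,
          ← hanti_iff, hanti m n hmn, Pi.neg_apply]
    · rw [hB.sum_apply_flip_eq_zero h, hB.sum_flip_apply_eq_zero h]

end IsLocal

def sgn (i : Fin D) (x : Vx D) : ℝ := (-1) ^ (x i : ℕ)

lemma sgn_flip (i k : Fin D) (x : Vx D) :
    sgn i (flip k x) = (if k = i then -1 else 1) * sgn i x := by
  unfold sgn
  split_ifs with h
  · subst h
    rw [flip_apply_self]
    generalize x k = a
    fin_cases a <;> norm_num
  · rw [flip_apply_of_ne _ _ (Ne.symm h), one_mul]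

@[simp] lemma sgn_zero (i : Fin D) : sgn i 0 = 1 := by simp [sgn]

noncomputable def skewA (i j : Fin D) : Matrix (Vx D) (Vx D) ℝ :=
  alphaStar i * adjA D * alphaStar j - alphaStar j * adjA D * alphaStar i

lemma skewA_apply (i j : Fin D) (x y : Vx D) :
    skewA i j x y = adjA D x y * (sgn i x * sgn j y - sgn j x * sgn i y) := by
  simp only [skewA, alphaStar, Matrix.sub_apply, mul_diagonal, diagonal_mul, sgn]
  ring

lemma adjA_transpose : (adjA D)ᵀ = adjA D := by
  simp [adjA_eq_sum_alpha, transpose_sum, alpha_transpose]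

lemma skewA_transpose (i j : Fin D) : (skewA i j)ᵀ = -skewA i j := by
  ext x y
  rw [transpose_apply, neg_apply, skewA_apply, skewA_apply, ← transpose_apply (adjA D),
    adjA_transpose]
  ring

lemma edge_skewA (i j k : Fin D) (x : Vx D) :
    edge (skewA i j) k x =
      ((if k = i then 2 else 0) - (if k = j then 2 else 0)) * (sgn i x * sgn j x) := by
  rw [edge, skewA_apply, adjA, if_pos (hamming_flip_self x k), sgn_flip, sgn_flip]
  split_ifs <;> ring

def aLike (D : ℕ) : Submodule ℝ (Matrix (Vx D) (Vx D) ℝ) where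
  carrier := {B | B * adjA D = adjA D * B ∧ IsLocal B}
  add_mem' := by
    rintro B C ⟨hB, hB'⟩ ⟨hC, hC'⟩
    refine ⟨by rw [add_mul, mul_add, hB, hC], fun x y h => ?_⟩
    rw [Matrix.add_apply, hB' x y h, hC' x y h, add_zero]
  zero_mem' := ⟨by rw [zero_mul, mul_zero], fun _ _ _ => rfl⟩
  smul_mem' := by
    rintro c B ⟨hB, hB'⟩
    refine ⟨by rw [Matrix.smul_mul, Matrix.mul_smul, hB], fun x y h => ?_⟩
    rw [Matrix.smul_apply, hB' x y h, smul_zero]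

lemma one_mem_aLike : (1 : Matrix (Vx D) (Vx D) ℝ) ∈ aLike D :=
  ⟨by rw [one_mul, mul_one], fun x y h => one_apply_ne fun hxy => by simp [hxy] at h⟩

lemma alpha_mem_aLike (i : Fin D) : alpha i ∈ aLike D := by
  refine ⟨?_, fun x y h => ?_⟩
  · ext x z
    rw [mul_adjA_apply, adjA_mul_apply]
    refine Finset.sum_congr rfl fun k _ => ?_
    simp only [alpha_apply]
    refine if_congr ⟨fun h => ?_, fun h => ?_⟩ rfl rfl
    · rw [← flip_flip k z, h, flip_comm]
    · rw [h, flip_comm, flip_flip]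
  · rw [alpha_apply, if_neg]
    rintro rfl
    simp at h

lemma flipDiff_edge_skewA (i j m n : Fin D) (x : Vx D) :
    flipDiff m (edge (skewA i j) n) x =
      ((if n = i then 2 else 0) - (if n = j then 2 else 0)) *
        ((if m = i then -1 else 1) * (if m = j then -1 else 1) - 1) * (sgn i x * sgn j x) := by
  simp only [flipDiff, edge_skewA, sgn_flip]
  ring

lemma skewA_mem_aLike (i j : Fin D) : skewA i j ∈ aLike D := by
  rcases eq_or_ne i j with rfl | hij
  · rw [skewA, sub_self]
    exact zero_mem _
  have hloc : IsLocal (skewA i j) := fun x y h => by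
    rw [skewA_apply, adjA, if_neg (by omega), zero_mul]
  refine ⟨(hloc.commute_adjA_iff).mpr ⟨fun x => ?_, fun k x => ?_, fun m n hmn => ?_⟩, hloc⟩
  · simp only [flipDiff_edge_skewA]
    rw [Fintype.sum_eq_add i j hij fun k ⟨hi, hj⟩ => by simp [hi, hj]]
    simp [hij, hij.symm]
  · rw [skewA_apply, skewA_apply]
    ring
  · funext x
    simp only [Pi.neg_apply, flipDiff_edge_skewA]
    split_ifs <;> subst_vars <;> simp_all

abbrev Pairs (D : ℕ) := {p : Fin D × Fin D // p.1 < p.2}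

lemma card_pairs : Fintype.card (Pairs D) = D.choose 2 := by
  rw [Fintype.card_subtype, Fintype.card_product_filter_lt, Fintype.card_fin]

noncomputable def twist (k l : Fin D) : Matrix (Vx D) (Vx D) ℝ →ₗ[ℝ] ℝ :=
  entryLinearMap ℝ ℝ 0 (flip k 0) - entryLinearMap ℝ ℝ (flip l 0) (flip k (flip l 0))

lemma twist_apply (k l : Fin D) (B : Matrix (Vx D) (Vx D) ℝ) :
    twist k l B = edge B k 0 - edge B k (flip l 0) := rfl

lemma twist_skewA {i j k l : Fin D} (hij : i < j) (hkl : k < l) :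
    twist k l (skewA i j) = if i = k ∧ j = l then 4 else 0 := by
  simp only [twist_apply, edge_skewA, sgn_flip, sgn_zero]
  rcases eq_or_ne k i with rfl | hki
  · rcases eq_or_ne l j with rfl | hlj
    · simp [hkl.ne, hkl.ne']
      norm_num
    · simp [hlj, hlj.symm, hkl.ne', hij.ne]
  · rcases eq_or_ne k j with rfl | hkj
    · simp [hki, (hij.trans hkl).ne', hkl.ne', Ne.symm hki]
    · simp [hki, hkj, Ne.symm hki]

noncomputable def alphaComb (c : ℝ) (a : Fin D → ℝ) : Matrix (Vx D) (Vx D) ℝ :=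
  c • 1 + ∑ k, a k • alpha k

noncomputable def skewComb (t : Pairs D → ℝ) : Matrix (Vx D) (Vx D) ℝ :=
  ∑ p, t p • skewA p.1.1 p.1.2

section Combinations

variable (c : ℝ) (a : Fin D → ℝ) (t : Pairs D → ℝ)

lemma alphaComb_apply_self (x : Vx D) : alphaComb c a x x = c := by
  simp [alphaComb, Matrix.sum_apply, alpha_apply_self]

lemma edge_alphaComb (k : Fin D) (x : Vx D) : edge (alphaComb c a) k x = a k := by
  simp [alphaComb, edge, Matrix.sum_apply, one_apply_ne (flip_ne_self k x).symm, alpha_apply_flip]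

lemma twist_alphaComb (k l : Fin D) : twist k l (alphaComb c a) = 0 := by
  rw [twist_apply, edge_alphaComb, edge_alphaComb, sub_self]

lemma alphaComb_transpose : (alphaComb c a)ᵀ = alphaComb c a := by
  simp [alphaComb, transpose_sum, alpha_transpose]

lemma alphaComb_mem_aLike : alphaComb c a ∈ aLike D :=
  add_mem (Submodule.smul_mem _ _ one_mem_aLike)
    (sum_mem fun k _ => Submodule.smul_mem _ _ (alpha_mem_aLike k))

lemma twist_skewComb (p : Pairs D) : twist p.1.1 p.1.2 (skewComb t) = 4 * t p := by
  simp only [skewComb, map_sum, map_smul, smul_eq_mul]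
  rw [Fintype.sum_eq_single p fun q hq => by
    rw [twist_skewA q.2 p.2, if_neg fun h => hq (Subtype.ext (Prod.ext h.1 h.2)), mul_zero],
    twist_skewA p.2 p.2, if_pos ⟨rfl, rfl⟩, mul_comm]

lemma skewComb_transpose : (skewComb t)ᵀ = -skewComb t := by
  simp [skewComb, transpose_sum, skewA_transpose]

lemma skewComb_mem_aLike : skewComb t ∈ aLike D :=
  sum_mem fun _ _ => Submodule.smul_mem _ _ (skewA_mem_aLike _ _)

end Combinations

theorem eq_alphaComb_of_twist_eq_zero {B : Matrix (Vx D) (Vx D) ℝ} (hB : B ∈ aLike D)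
    (h : ∀ k l, k < l → twist k l B = 0) : B = alphaComb (B 0 0) (fun k => edge B k 0) := by
  obtain ⟨hsum, hdiag, hanti⟩ := hB.2.commute_adjA_iff.mp hB.1
  have hedge := eq_apply_zero_of_flipDiff_antisymm hanti hsum fun k l hkl => by
    have := h k l hkl
    rw [twist_apply] at this
    simp only [flipDiff]
    linarith
  refine hB.2.ext (alphaComb_mem_aLike _ _).2 (fun x => ?_) (fun k x => ?_)
  · rw [alphaComb_apply_self]
    exact eq_apply_zero_of_flipDiff_eq_zero (g := fun x => B x x)
      (fun m => funext fun y => sub_eq_zero.mpr (hdiag m y)) x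
  · rw [edge_alphaComb, hedge]

theorem exists_eq_alphaComb_add_skewComb {B : Matrix (Vx D) (Vx D) ℝ} (hB : B ∈ aLike D) :
    ∃ c a t, B = alphaComb c a + skewComb t := by
  let t : Pairs D → ℝ := fun p => twist p.1.1 p.1.2 B / 4
  have hB' : B - skewComb t ∈ aLike D := sub_mem hB (skewComb_mem_aLike t)
  refine ⟨_, _, t, eq_add_of_sub_eq (eq_alphaComb_of_twist_eq_zero hB' fun k l hkl => ?_)⟩
  rw [map_sub, twist_skewComb t ⟨(k, l), hkl⟩]
  ring

theorem eq_zero_of_alphaComb_add_skewComb_eq_zero {c : ℝ} {a : Fin D → ℝ} {t : Pairs D → ℝ}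
    (h : alphaComb c a + skewComb t = 0) : c = 0 ∧ a = 0 ∧ t = 0 := by
  have ht : t = 0 := funext fun p => by
    have := congrArg (twist p.1.1 p.1.2) h
    rw [map_add, twist_alphaComb, twist_skewComb, map_zero] at this
    simp only [Pi.zero_apply]
    linarith
  have hA : alphaComb c a = 0 := by simpa [ht, skewComb] using h
  refine ⟨?_, funext fun k => ?_, ht⟩
  · simpa [alphaComb_apply_self] using congrFun (congrFun hA 0) 0
  · have : edge (alphaComb c a) k 0 = edge 0 k 0 := by rw [hA]
    rwa [edge_alphaComb] at this

noncomputable def aLikeFamily (D : ℕ) : Unit ⊕ Fin D ⊕ Pairs D → Matrix (Vx D) (Vx D) ℝ :=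
  Sum.elim (fun _ => 1) (Sum.elim alpha fun p => skewA p.1.1 p.1.2)

lemma sum_smul_aLikeFamily (g : Unit ⊕ Fin D ⊕ Pairs D → ℝ) :
    ∑ i, g i • aLikeFamily D i =
      alphaComb (g (.inl ())) (g ∘ .inr ∘ .inl) + skewComb (g ∘ .inr ∘ .inr) := by
  simp [aLikeFamily, Fintype.sum_sum_type, alphaComb, skewComb, add_assoc]

theorem linearIndependent_aLikeFamily : LinearIndependent ℝ (aLikeFamily D) := by
  refine Fintype.linearIndependent_iff.mpr fun g hg => ?_
  rw [sum_smul_aLikeFamily] at hg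
  obtain ⟨hc, ha, ht⟩ := eq_zero_of_alphaComb_add_skewComb_eq_zero hg
  rintro (⟨⟩ | k | p)
  exacts [hc, congrFun ha k, congrFun ht p]

theorem span_aLikeFamily : Submodule.span ℝ (Set.range (aLikeFamily D)) = aLike D := by
  refine le_antisymm (Submodule.span_le.mpr ?_) fun B hB => ?_
  · rintro _ ⟨⟨⟩ | k | p, rfl⟩
    exacts [one_mem_aLike, alpha_mem_aLike k, skewA_mem_aLike _ _]
  · obtain ⟨c, a, t, rfl⟩ := exists_eq_alphaComb_add_skewComb hB
    rw [Submodule.mem_span_range_iff_exists_fun]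
    exact ⟨Sum.elim (fun _ => c) (Sum.elim a t), by rw [sum_smul_aLikeFamily]; rfl⟩

theorem finrank_aLike : Module.finrank ℝ (aLike D) = 1 + D + D.choose 2 := by
  rw [← span_aLikeFamily, finrank_span_eq_card linearIndependent_aLikeFamily]
  simp [card_pairs, add_assoc]

theorem mem_span_skewA_iff {B : Matrix (Vx D) (Vx D) ℝ} :
    B ∈ Submodule.span ℝ (Set.range fun p : Pairs D => skewA p.1.1 p.1.2) ↔
      B ∈ aLike D ∧ Bᵀ = -B := by
  rw [Submodule.mem_span_range_iff_exists_fun]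
  constructor
  · rintro ⟨t, rfl⟩
    exact ⟨skewComb_mem_aLike t, skewComb_transpose t⟩
  · rintro ⟨hB, hBT⟩
    obtain ⟨c, a, t, rfl⟩ := exists_eq_alphaComb_add_skewComb hB
    rw [transpose_add, alphaComb_transpose, skewComb_transpose] at hBT
    have hA : alphaComb c a = 0 := by
      ext x y
      have := congrFun (congrFun hBT x) y
      simp only [Matrix.add_apply, Matrix.neg_apply] at this
      simp only [Matrix.zero_apply]
      linarith
    exact ⟨t, by rw [hA, zero_add]; rfl⟩

end Hypercube

theorem antisym_Alike_basis_general (D : ℕ) :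
    LinearIndependent ℝ
      (fun p : {p : Fin D × Fin D // p.1 < p.2} =>
        alphaStar p.1.1 * adjA D * alphaStar p.1.2 - alphaStar p.1.2 * adjA D * alphaStar p.1.1) ∧
    (Submodule.span ℝ
        (Set.range (fun p : {p : Fin D × Fin D // p.1 < p.2} =>
          alphaStar p.1.1 * adjA D * alphaStar p.1.2 -
            alphaStar p.1.2 * adjA D * alphaStar p.1.1)) : Set (Matrix (Vx D) (Vx D) ℝ)) =
      {B | (B * adjA D = adjA D * B ∧ ∀ x y : Vx D, 2 ≤ hamming x y → B x y = 0) ∧ Bᵀ = -B} ∧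
    Module.finrank ℝ
      (Submodule.span ℝ
        (Set.range (fun p : {p : Fin D × Fin D // p.1 < p.2} =>
          alphaStar p.1.1 * adjA D * alphaStar p.1.2 -
            alphaStar p.1.2 * adjA D * alphaStar p.1.1))) = D.choose 2 ∧
    Module.finrank ℝ
      (Submodule.span ℝ
        {B : Matrix (Vx D) (Vx D) ℝ |
          B * adjA D = adjA D * B ∧ ∀ x y : Vx D, 2 ≤ hamming x y → B x y = 0}) =
      1 + D + D.choose 2 := by
  have hind : LinearIndependent ℝ fun p : Hypercube.Pairs D => Hypercube.skewA p.1.1 p.1.2 :=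
    Hypercube.linearIndependent_aLikeFamily.comp _ (Sum.inr_injective.comp Sum.inr_injective)
  refine ⟨hind, Set.ext fun B => Hypercube.mem_span_skewA_iff, ?_, ?_⟩
  · exact (finrank_span_eq_card hind).trans Hypercube.card_pairs
  · have hset : {B : Matrix (Vx D) (Vx D) ℝ |
        B * adjA D = adjA D * B ∧ ∀ x y : Vx D, 2 ≤ hamming x y → B x y = 0} =
        Hypercube.aLike D := rfl
    rw [hset, Submodule.span_eq, Hypercube.finrank_aLike]

theorem antisym_Alike_basis (D : ℕ) (hD : 0 < D) :
    LinearIndependent ℝ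
      (fun p : {p : Fin D × Fin D // p.1 < p.2} =>
        alphaStar p.1.1 * adjA D * alphaStar p.1.2 - alphaStar p.1.2 * adjA D * alphaStar p.1.1) ∧
    (Submodule.span ℝ
        (Set.range (fun p : {p : Fin D × Fin D // p.1 < p.2} =>
          alphaStar p.1.1 * adjA D * alphaStar p.1.2 -
            alphaStar p.1.2 * adjA D * alphaStar p.1.1)) : Set (Matrix (Vx D) (Vx D) ℝ)) =
      {B | (B * adjA D = adjA D * B ∧ ∀ x y : Vx D, 2 ≤ hamming x y → B x y = 0) ∧ Bᵀ = -B} ∧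
    Module.finrank ℝ
      (Submodule.span ℝ
        (Set.range (fun p : {p : Fin D × Fin D // p.1 < p.2} =>
          alphaStar p.1.1 * adjA D * alphaStar p.1.2 -
            alphaStar p.1.2 * adjA D * alphaStar p.1.1))) = D.choose 2 ∧
    Module.finrank ℝ
      (Submodule.span ℝ
        {B : Matrix (Vx D) (Vx D) ℝ |
          B * adjA D = adjA D * B ∧ ∀ x y : Vx D, 2 ≤ hamming x y → B x y = 0}) =
      1 + D + D.choose 2 :=
  antisym_Alike_basis_general D
end
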